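/- arXiv:1901.06412 — 8 statements merged into one kernel-verified Lean document; each statement's English description precedes it below -/
import Mathlib

section
/- For every integer d ≥ 2, the polynomial R(v) = d²v⁴ - d(d+1)v³ + 2dv - 1 has exactly one root in the interval [0, 1/d]. -/
/-!
`R` is strictly increasing on `[0, 1/d]`: with `u = d v ∈ (0, 1)`,
`d R'(v) = 4u³ - 3(d+1)u² + 2d² = (2d-1)(d-1) + (1-u)(3(d-1)(1+u) + 2(1-u)(1+2u)) > 0`
once `d ≥ 1`. Since `R(0) = -1 < 0 ≤ 1 - 1/d = R(1/d)`, the intermediate value theorem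
gives a root, and strict monotonicity makes it unique.
-/

open Set

theorem StrictMonoOn.existsUnique_mem_Icc_eq
    {α δ : Type*} [ConditionallyCompleteLinearOrder α] [TopologicalSpace α] [OrderTopology α]
    [DenselyOrdered α] [LinearOrder δ] [TopologicalSpace δ] [OrderClosedTopology δ]
    {f : α → δ} {a b : α} {y : δ} (hab : a ≤ b) (hf : ContinuousOn f (Icc a b))
    (hmono : StrictMonoOn f (Icc a b)) (hy : y ∈ Icc (f a) (f b)) :
    ∃! x, x ∈ Icc a b ∧ f x = y := by
  obtain ⟨x, hx, hfx⟩ := intermediate_value_Icc hab hf hy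
  exact ⟨x, ⟨hx, hfx⟩, fun x' ⟨hx', hfx'⟩ => hmono.injOn hx' hx (hfx'.trans hfx.symm)⟩

namespace Quartic

def R (d v : ℝ) : ℝ := d ^ 2 * v ^ 4 - d * (d + 1) * v ^ 3 + 2 * d * v - 1

theorem continuous_R (d : ℝ) : Continuous (R d) := by
  unfold R
  fun_prop

theorem hasDerivAt_R (d v : ℝ) :
    HasDerivAt (R d) (4 * d ^ 2 * v ^ 3 - 3 * d * (d + 1) * v ^ 2 + 2 * d) v := by
  have h4 : HasDerivAt (fun w : ℝ => w ^ 4) (4 * v ^ 3) v := by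
    simpa using hasDerivAt_pow 4 v
  have h3 : HasDerivAt (fun w : ℝ => w ^ 3) (3 * v ^ 2) v := by
    simpa using hasDerivAt_pow 3 v
  exact ((((h4.const_mul (d ^ 2)).sub (h3.const_mul (d * (d + 1)))).add
    ((hasDerivAt_id v).const_mul (2 * d))).sub_const 1).congr_deriv (by ring)

theorem deriv_R_pos {d v : ℝ} (hd : 1 ≤ d) (hv : v ∈ Ioo 0 (1 / d)) : 0 < deriv (R d) v := by
  obtain ⟨hv₀, hv₁⟩ := hv
  rw [lt_div_iff₀ (by linarith), mul_comm] at hv₁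
  rw [(hasDerivAt_R d v).deriv]
  set u := d * v
  have hu₀ : 0 < u := by positivity
  have key : d * (4 * d ^ 2 * v ^ 3 - 3 * d * (d + 1) * v ^ 2 + 2 * d) =
      (2 * d - 1) * (d - 1) + (1 - u) * (3 * (d - 1) * (1 + u) + 2 * (1 - u) * (1 + 2 * u)) := by
    simp only [u]
    ring
  have hpos : 0 < (2 * d - 1) * (d - 1) +
      (1 - u) * (3 * (d - 1) * (1 + u) + 2 * (1 - u) * (1 + 2 * u)) := by
    have : 0 < 3 * (d - 1) * (1 + u) + 2 * (1 - u) * (1 + 2 * u) := by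
      nlinarith [mul_nonneg (sub_nonneg.2 hd) hu₀.le]
    nlinarith [mul_pos (sub_pos.2 hv₁) this]
  rw [← key] at hpos
  exact pos_of_mul_pos_right hpos (by linarith)

theorem strictMonoOn_R {d : ℝ} (hd : 1 ≤ d) : StrictMonoOn (R d) (Icc 0 (1 / d)) :=
  strictMonoOn_of_deriv_pos (convex_Icc _ _) (continuous_R d).continuousOn
    fun _ hv => deriv_R_pos hd (by rwa [interior_Icc] at hv)

theorem R_zero (d : ℝ) : R d 0 = -1 := by
  simp [R]

theorem R_one_div {d : ℝ} (hd : d ≠ 0) : R d (1 / d) = 1 - 1 / d := by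
  unfold R
  field_simp
  ring

theorem existsUnique_R_eq_zero {d : ℝ} (hd : 1 ≤ d) :
    ∃! v, v ∈ Icc 0 (1 / d) ∧ R d v = 0 := by
  refine (strictMonoOn_R hd).existsUnique_mem_Icc_eq (by positivity)
    (continuous_R d).continuousOn ?_
  rw [R_zero, R_one_div (by positivity)]
  have : 1 / d ≤ 1 := by rw [div_le_one (by positivity)]; exact hd
  constructor <;> linarith

end Quartic

theorem stmt1 (d : ℕ) (hd : 2 ≤ d) :
    ∃! v : ℝ, v ∈ Set.Icc 0 (1 / (d : ℝ)) ∧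
      (d : ℝ) ^ 2 * v ^ 4 - d * (d + 1) * v ^ 3 + 2 * d * v - 1 = 0 :=
  Quartic.existsUnique_R_eq_zero (by exact_mod_cast hd.trans' one_le_two)
end

section
/- The sequence φ_n defined by the inductive formula φ_1(b) = b, φ_2(b) = b²(2-b), and φ_n(b) = bⁿ + b(1-b)φ_{n-1}(b) + Σ_{ℓ=2}^{n-1} b^ℓ(1-b)[φ_{n-ℓ+1}(b) + (1-b)φ_{n-ℓ}(b)] for n ≥ 3, satisfies the linear recurrence φ_n(b) = b(2-b²)φ_{n-1}(b) - b³(1-b)φ_{n-2}(b) for all n ≥ 3 and all real b. -/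
/-!
The sum in the recursion is the convolution of `c j = (1 - b) (φ_{j+1} + (1 - b) φ_j)` with the
geometric sequence `(b ^ ℓ)`, so subtracting `b` times the recursion for `φ_{n-1}` from the one
for `φ_n` collapses it to its `ℓ = 2` term, and what is left is the three-term recurrence.
For `n = 3` there is nothing to subtract; there the values of `φ_1` and `φ_2` give it directly.
-/

open Finset

theorem sum_Icc_two_pow_mul_succ {R : Type*} [CommSemiring R] (x : R) (g : ℕ → R)
    {n : ℕ} (hn : 2 ≤ n) :
    ∑ ℓ ∈ Icc 2 n, x ^ ℓ * g (n + 1 - ℓ) =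
      x ^ 2 * g (n - 1) + x * ∑ ℓ ∈ Icc 2 (n - 1), x ^ ℓ * g (n - ℓ) := by
  obtain ⟨m, rfl⟩ : ∃ m, n = m + 2 := ⟨n - 2, by omega⟩
  rw [← Ico_add_one_right_eq_Icc, ← Ico_add_one_right_eq_Icc,
    sum_Ico_eq_sum_range, sum_Ico_eq_sum_range, show m + 2 + 1 - 2 = m + 1 by omega,
    sum_range_succ', mul_sum, add_comm]
  congr 1
  refine sum_congr rfl fun i _ => ?_
  rw [show m + 2 + 1 - (2 + (i + 1)) = m + 2 - (2 + i) by omega]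
  ring

theorem stmt4 (φ : ℕ → ℝ → ℝ)
    (h1 : ∀ b : ℝ, φ 1 b = b)
    (h2 : ∀ b : ℝ, φ 2 b = b ^ 2 * (2 - b))
    (h3 : ∀ n, 3 ≤ n → ∀ b : ℝ,
      φ n b = b ^ n + b * (1 - b) * φ (n - 1) b +
        ∑ ℓ ∈ Finset.Icc 2 (n - 1),
          b ^ ℓ * (1 - b) * (φ (n - ℓ + 1) b + (1 - b) * φ (n - ℓ) b)) :
    ∀ n, 3 ≤ n → ∀ b : ℝ,
      φ n b = b * (2 - b ^ 2) * φ (n - 1) b - b ^ 3 * (1 - b) * φ (n - 2) b := by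
  intro n hn b
  set c : ℕ → ℝ := fun j => (1 - b) * (φ (j + 1) b + (1 - b) * φ j b)
  have hrec : ∀ n, 3 ≤ n →
      φ n b = b ^ n + b * (1 - b) * φ (n - 1) b + ∑ ℓ ∈ Icc 2 (n - 1), b ^ ℓ * c (n - ℓ) := by
    intro n hn
    simp only [h3 n hn b, c, mul_assoc]
  rcases (show n = 3 ∨ 4 ≤ n by omega) with rfl | _
  · have h := hrec 3 le_rfl
    simp only [Nat.reduceSub, Icc_self, sum_singleton, c, h1, h2] at h ⊢
    rw [h]
    ring
  · obtain ⟨m, rfl⟩ : ∃ m, n = m + 4 := ⟨n - 4, by omega⟩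
    have hnext := hrec (m + 4) hn
    have hprev := hrec (m + 3) (by omega)
    rw [show m + 4 - 1 = m + 3 by omega, sum_Icc_two_pow_mul_succ b c (by omega : 2 ≤ m + 3)]
      at hnext
    simp only [show m + 3 - 1 = m + 2 by omega, show m + 4 - 1 = m + 3 by omega,
      show m + 4 - 2 = m + 2 by omega, c] at hprev hnext ⊢
    linear_combination hnext - b * hprev
end

section
/- Let φ_n satisfy φ_0(b) = 1, φ_1(b) = b, and φ_n(b) = b(2-b²)φ_{n-1}(b) - b³(1-b)φ_{n-2}(b) for n ≥ 2. Then for every n ≥ 0 and b ∈ (0, 1/d] (with d ≥ 2), φ_n(b) = bⁿ/(2^{n+1} ψ(b)) [(ψ(b)-b²)(2-b²-ψ(b))ⁿ + (ψ(b)+b²)(2-b²+ψ(b))ⁿ], where ψ(b) = sqrt(b⁴-4b+4). -/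
def phi7 : ℕ → ℝ → ℝ
  | 0, _ => 1
  | 1, b => b
  | (n + 2), b => b * (2 - b ^ 2) * phi7 (n + 1) b - b ^ 3 * (1 - b) * phi7 n b

theorem stmt7 (d : ℕ) (hd : 2 ≤ d) (b : ℝ) (hb : b ∈ Set.Ioc 0 (1 / (d : ℝ))) (n : ℕ) :
    let ψ := Real.sqrt (b ^ 4 - 4 * b + 4)
    phi7 n b = b ^ n / (2 ^ (n + 1) * ψ) *
      ((ψ - b ^ 2) * (2 - b ^ 2 - ψ) ^ n + (ψ + b ^ 2) * (2 - b ^ 2 + ψ) ^ n) := by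
  intro ψ
  have hb0 : 0 < b := hb.1
  have hd2 : (2:ℝ) ≤ (d:ℝ) := by exact_mod_cast hd
  have hb2 : b ≤ 1/2 := by
    refine hb.2.trans ?_
    rw [div_le_div_iff₀ (by linarith) (by norm_num)]
    linarith
  have h4 : 0 < b ^ 4 - 4 * b + 4 := by nlinarith [pow_nonneg hb0.le 4]
  have hψsq : ψ ^ 2 = b ^ 4 - 4 * b + 4 := Real.sq_sqrt h4.le
  have hψpos : 0 < ψ := Real.sqrt_pos.mpr h4
  have hψne : ψ ≠ 0 := ne_of_gt hψpos
  have hA2 : (2 - b ^ 2 - ψ) ^ 2 = 2 * (2 - b ^ 2) * (2 - b ^ 2 - ψ) - 4 * b * (1 - b) := by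
    linear_combination hψsq
  have hB2 : (2 - b ^ 2 + ψ) ^ 2 = 2 * (2 - b ^ 2) * (2 - b ^ 2 + ψ) - 4 * b * (1 - b) := by
    linear_combination hψsq
  induction n using Nat.strong_induction_on with
  | _ n ih =>
    match n with
    | 0 => simp [phi7]; field_simp; ring
    | 1 =>
      show b = _
      field_simp
      ring_nf
    | (m + 2) =>
      have keyA : (2 - b ^ 2 - ψ) ^ (m + 2) =
          2 * (2 - b ^ 2) * (2 - b ^ 2 - ψ) ^ (m + 1) - 4 * b * (1 - b) * (2 - b ^ 2 - ψ) ^ m := by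
        have h : (2 - b ^ 2 - ψ) ^ (m + 2) = (2 - b ^ 2 - ψ) ^ m * (2 - b ^ 2 - ψ) ^ 2 := by ring
        rw [h, hA2]; ring
      have keyB : (2 - b ^ 2 + ψ) ^ (m + 2) =
          2 * (2 - b ^ 2) * (2 - b ^ 2 + ψ) ^ (m + 1) - 4 * b * (1 - b) * (2 - b ^ 2 + ψ) ^ m := by
        have h : (2 - b ^ 2 + ψ) ^ (m + 2) = (2 - b ^ 2 + ψ) ^ m * (2 - b ^ 2 + ψ) ^ 2 := by ring
        rw [h, hB2]; ring
      rw [phi7, ih (m + 1) (by omega), ih m (by omega), keyA, keyB]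
      field_simp
      ring
end

section
/- For every integer d ≥ 2 and every b ∈ [0, 1/d], λ(b) = 1/d if and only if R(b) = 0, where λ(b) = (b/2)(2 - b² + sqrt(b⁴-4b+4)) and R(b) = d²b⁴ - d(d+1)b³ + 2db - 1. -/
theorem stmt9 (d : ℕ) (hd : 2 ≤ d) (b : ℝ) (hb : b ∈ Set.Icc 0 (1 / (d : ℝ))) :
    b / 2 * (2 - b ^ 2 + Real.sqrt (b ^ 4 - 4 * b + 4)) = 1 / (d : ℝ) ↔
      (d : ℝ) ^ 2 * b ^ 4 - d * (d + 1) * b ^ 3 + 2 * d * b - 1 = 0 := by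
  obtain ⟨hb0, hb1⟩ := hb
  have hd2 : (2 : ℝ) ≤ (d : ℝ) := by exact_mod_cast hd
  have hdpos : (0 : ℝ) < (d : ℝ) := by linarith
  have hdne : (d : ℝ) ≠ 0 := ne_of_gt hdpos
  have hdb : (d : ℝ) * b ≤ 1 := by
    rw [le_div_iff₀ hdpos] at hb1
    linarith
  have hbhalf : b ≤ 1 / 2 := by
    calc b ≤ 1 / (d : ℝ) := hb1
    _ ≤ 1 / 2 := by apply one_div_le_one_div_of_le <;> linarith
  have harg : (0 : ℝ) ≤ b ^ 4 - 4 * b + 4 := by nlinarith [pow_nonneg hb0 4]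
  set S := Real.sqrt (b ^ 4 - 4 * b + 4) with hSdef
  have hS0 : 0 ≤ S := Real.sqrt_nonneg _
  have hS2 : S ^ 2 = b ^ 4 - 4 * b + 4 := Real.sq_sqrt harg
  have ht : (0 : ℝ) < (d : ℝ) * b ^ 3 - 2 * d * b + 2 := by
    rcases eq_or_lt_of_le hb0 with h | h
    · rw [← h]; norm_num
    · nlinarith [mul_pos (mul_pos hdpos h) (mul_pos h h)]
  constructor
  · intro h
    have hbs : (d : ℝ) * b * S = (d : ℝ) * b ^ 3 - 2 * d * b + 2 := by
      have h2 : (d : ℝ) * (b / 2 * (2 - b ^ 2 + S)) = (d : ℝ) * (1 / d) := by rw [h]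
      rw [mul_one_div, div_self hdne] at h2
      nlinarith [h2]
    have hsq : (d : ℝ) ^ 2 * b ^ 2 * (b ^ 4 - 4 * b + 4)
        = ((d : ℝ) * b ^ 3 - 2 * d * b + 2) ^ 2 := by
      rw [← hS2]; nlinarith [hbs]
    linear_combination (1 / 4) * hsq
  · intro hR
    have hsq : ((d : ℝ) * b * S) ^ 2 = ((d : ℝ) * b ^ 3 - 2 * d * b + 2) ^ 2 := by
      have : ((d : ℝ) * b * S) ^ 2 = (d : ℝ) ^ 2 * b ^ 2 * (b ^ 4 - 4 * b + 4) := by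
        rw [← hS2]; ring
      rw [this]; linear_combination 4 * hR
    have hbs : (d : ℝ) * b * S = (d : ℝ) * b ^ 3 - 2 * d * b + 2 := by
      have hfac : ((d : ℝ) * b * S - ((d : ℝ) * b ^ 3 - 2 * d * b + 2))
          * ((d : ℝ) * b * S + ((d : ℝ) * b ^ 3 - 2 * d * b + 2)) = 0 := by
        linear_combination hsq
      rcases mul_eq_zero.mp hfac with h | h
      · linarith
      · nlinarith [mul_nonneg (mul_nonneg (le_of_lt hdpos) hb0) hS0]
    have key : (d : ℝ) * (b / 2 * (2 - b ^ 2 + S)) = 1 := by nlinarith [hbs]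
    rw [eq_div_iff hdne]
    linear_combination key
end

section
/- The function λ(b) = (b/2)(2 - b² + sqrt(b⁴ - 4b + 4)) is strictly increasing on [0, 1/d] for every integer d ≥ 2, satisfies λ(0) = 0 and λ(1/d) > 1/d. -/
/-! With `s = √(b⁴ - 4b + 4)` (the radicand is `(b² - 1)² + 2(b - 1)² + 1 > 0`), one has
`λ'(b) = (2 - 3b² + s)/2 + b(b³ - 1)/s`, which is positive on `[0, 1/2] ⊇ [0, 1/d]`.
Moreover `b < λ(b)` amounts to `b² < s`, i.e. `b⁴ < b⁴ - 4b + 4`, i.e. `b < 1`. -/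

open Real

noncomputable def lam (b : ℝ) : ℝ := b / 2 * (2 - b ^ 2 + √(b ^ 4 - 4 * b + 4))

lemma lam_radicand_pos (b : ℝ) : 0 < b ^ 4 - 4 * b + 4 := by
  nlinarith [sq_nonneg (b ^ 2 - 1), sq_nonneg (b - 1)]

lemma hasDerivAt_lam (x : ℝ) :
    HasDerivAt lam ((2 - 3 * x ^ 2 + √(x ^ 4 - 4 * x + 4)) / 2 +
      x * (x ^ 3 - 1) / √(x ^ 4 - 4 * x + 4)) x := by
  have hrad : HasDerivAt (fun y : ℝ => y ^ 4 - 4 * y + 4) (4 * x ^ 3 - 4) x := by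
    simpa using ((hasDerivAt_pow 4 x).sub ((hasDerivAt_id x).const_mul 4)).add_const 4
  have hsqrt := hrad.sqrt (lam_radicand_pos x).ne'
  have hfactor := ((hasDerivAt_pow 2 x).const_sub 2).add hsqrt
  refine (((hasDerivAt_id x).div_const 2).mul hfactor).congr_deriv ?_
  simp only [Pi.add_apply, id_eq]
  field_simp
  ring

lemma deriv_lam_pos {x : ℝ} (hx₀ : 0 ≤ x) (hx : x ≤ 1 / 2) :
    0 < (2 - 3 * x ^ 2 + √(x ^ 4 - 4 * x + 4)) / 2 +
      x * (x ^ 3 - 1) / √(x ^ 4 - 4 * x + 4) := by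
  set s := √(x ^ 4 - 4 * x + 4)
  have hs : 0 < s := sqrt_pos.mpr (lam_radicand_pos x)
  have hs_sq : s ^ 2 = x ^ 4 - 4 * x + 4 := sq_sqrt (lam_radicand_pos x).le
  rw [div_add_div _ _ two_ne_zero hs.ne']
  refine div_pos ?_ (by positivity)
  nlinarith [mul_nonneg (by nlinarith : (0 : ℝ) ≤ 2 - 3 * x ^ 2) hs.le]

lemma strictMonoOn_lam : StrictMonoOn lam (Set.Icc 0 (1 / 2)) := by
  refine strictMonoOn_of_deriv_pos (convex_Icc _ _)
    (fun x _ => (hasDerivAt_lam x).continuousAt.continuousWithinAt) fun x hx => ?_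
  rw [interior_Icc] at hx
  rw [(hasDerivAt_lam x).deriv]
  exact deriv_lam_pos hx.1.le hx.2.le

lemma lam_zero : lam 0 = 0 := by
  simp [lam]

lemma lt_lam {b : ℝ} (hb₀ : 0 < b) (hb₁ : b < 1) : b < lam b := by
  have hsq : b ^ 2 < √(b ^ 4 - 4 * b + 4) := by
    rw [lt_sqrt (by positivity)]
    nlinarith
  unfold lam
  nlinarith

theorem stmt10 (d : ℕ) (hd : 2 ≤ d) :
    StrictMonoOn (fun b : ℝ => b / 2 * (2 - b ^ 2 + Real.sqrt (b ^ 4 - 4 * b + 4)))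
        (Set.Icc 0 (1 / (d : ℝ))) ∧
      (0 : ℝ) / 2 * (2 - (0 : ℝ) ^ 2 + Real.sqrt ((0 : ℝ) ^ 4 - 4 * 0 + 4)) = 0 ∧
      1 / (d : ℝ) <
        (1 / (d : ℝ)) / 2 * (2 - (1 / (d : ℝ)) ^ 2 +
          Real.sqrt ((1 / (d : ℝ)) ^ 4 - 4 * (1 / (d : ℝ)) + 4)) := by
  have hd' : (2 : ℝ) ≤ d := by exact_mod_cast hd
  have h_le_half : 1 / (d : ℝ) ≤ 1 / 2 := one_div_le_one_div_of_le two_pos hd'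
  refine ⟨strictMonoOn_lam.mono (Set.Icc_subset_Icc_right h_le_half), lam_zero,
    lt_lam (by positivity) (by linarith)⟩
end

section
/- For every integer d ≥ 2, let v̄ be the unique root in [0,1/d] of R(v) = d²v⁴ - d(d+1)v³ + 2dv - 1, and set p̄ = (d+1)v̄/(1+dv̄²). Then Q(p̄) = 0, where Q(p) = p⁴ - (4(d+1)/(3d+1))p³ - (2(d-1)(d+1)²/(3d+1)²)p² + ((d+1)³/(d(3d+1)))p - (d+1)⁴/(d(3d+1)²). -/
set_option maxHeartbeats 2000000 in
theorem stmt12 (d : ℕ) (hd : 2 ≤ d) (v : ℝ) (hv : v ∈ Set.Icc 0 (1 / (d : ℝ)))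
    (hroot : (d : ℝ) ^ 2 * v ^ 4 - d * (d + 1) * v ^ 3 + 2 * d * v - 1 = 0)
    (p : ℝ) (hp : p = ((d : ℝ) + 1) * v / (1 + d * v ^ 2)) :
    p ^ 4 - 4 * ((d : ℝ) + 1) / (3 * d + 1) * p ^ 3 -
        2 * ((d : ℝ) - 1) * (d + 1) ^ 2 / (3 * d + 1) ^ 2 * p ^ 2 +
        ((d : ℝ) + 1) ^ 3 / (d * (3 * d + 1)) * p -
        ((d : ℝ) + 1) ^ 4 / (d * (3 * d + 1) ^ 2) = 0 := by
  have hd1 : (1:ℝ) ≤ (d:ℝ) := by exact_mod_cast Nat.one_le_of_lt hd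
  have hd0 : (d:ℝ) ≠ 0 := by positivity
  have h3 : (3*(d:ℝ)+1) ≠ 0 := by positivity
  have hv0 : 0 ≤ v := hv.1
  have hw : (1:ℝ) + d * v ^ 2 ≠ 0 := by positivity
  subst hp
  have hQ : ((((d:ℝ) + 1) * v / (1 + d * v ^ 2)) ^ 4 -
        4 * ((d : ℝ) + 1) / (3 * d + 1) * ((((d:ℝ) + 1) * v / (1 + d * v ^ 2))) ^ 3 -
        2 * ((d : ℝ) - 1) * (d + 1) ^ 2 / (3 * d + 1) ^ 2 * ((((d:ℝ) + 1) * v / (1 + d * v ^ 2))) ^ 2 +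
        ((d : ℝ) + 1) ^ 3 / (d * (3 * d + 1)) * ((((d:ℝ) + 1) * v / (1 + d * v ^ 2))) -
        ((d : ℝ) + 1) ^ 4 / (d * (3 * d + 1) ^ 2)) =
      (((d : ℝ) ^ 2 * v ^ 4 - d * (d + 1) * v ^ 3 + 2 * d * v - 1) *
        (((d:ℝ)+1)^4 * (1 - (d+1)*v + 2*d^2*v^3 - d^2*v^4))) /
      ((d:ℝ) * (3*d+1)^2 * (1 + d*v^2)^4) := by
    field_simp
    ring
  rw [hQ, hroot, zero_mul, zero_div]
end

section
/- For every integer d ≥ 2, the quartic polynomial Q(p) = p⁴ - (4(d+1)/(3d+1))p³ - (2(d-1)(d+1)²/(3d+1)²)p² + ((d+1)³/(d(3d+1)))p - (d+1)⁴/(d(3d+1)²) has exactly one root in the interval (0,1). -/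
/-- Positivity of the quartic numerator on `[3/4, 1]`, in shifted variables. -/
lemma aux_P3 (u s : ℝ) (hu : 0 ≤ u) (hs : 0 ≤ s) (h1 : s ≤ 1) :
    0 < (81/128 + 135/32*s - 333/64*s^2 + 63/32*s^3 + 49/128*s^4)
      + u * (837/256 + 315/64*s - 849/128*s^2 + 187/64*s^3 + 133/256*s^4)
      + u^2 * (207/64 + 39/16*s - 107/32*s^2 + 23/16*s^3 + 15/64*s^4)
      + u^3 * (297/256 + 31/64*s - 117/128*s^2 + 15/64*s^3 + 9/256*s^4)
      + u^4 * (1/8 - 1/8*s^2) := by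
  have hss1 := mul_nonneg hs (sub_nonneg.2 h1)
  have hsss1 := mul_nonneg (mul_nonneg hs hs) (sub_nonneg.2 h1)
  have hss11 := mul_nonneg (mul_nonneg hs (sub_nonneg.2 h1)) (sub_nonneg.2 h1)
  have g0 : (0:ℝ) < 81/128 + 135/32*s - 333/64*s^2 + 63/32*s^3 + 49/128*s^4 := by
    nlinarith [hss1, sq_nonneg s, sq_nonneg (1-s), hsss1, hss11]
  have g1 : (0:ℝ) ≤ 837/256 + 315/64*s - 849/128*s^2 + 187/64*s^3 + 133/256*s^4 := by
    nlinarith [hss1, sq_nonneg s, sq_nonneg (1-s), hsss1, hss11]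
  have g2 : (0:ℝ) ≤ 207/64 + 39/16*s - 107/32*s^2 + 23/16*s^3 + 15/64*s^4 := by
    nlinarith [hss1, sq_nonneg s, sq_nonneg (1-s), hsss1, hss11]
  have g3 : (0:ℝ) ≤ 297/256 + 31/64*s - 117/128*s^2 + 15/64*s^3 + 9/256*s^4 := by
    nlinarith [hss1, sq_nonneg s, sq_nonneg (1-s), hsss1, hss11]
  have g4 : (0:ℝ) ≤ 1/8 - 1/8*s^2 := by nlinarith [mul_nonneg hs hs]
  have h2 := mul_nonneg hu g1
  have h3 := mul_nonneg (pow_nonneg hu 2) g2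
  have h4 := mul_nonneg (pow_nonneg hu 3) g3
  have h5 := mul_nonneg (pow_nonneg hu 4) g4
  linarith

/-- Positivity of the derivative numerator on `[0, 3/4]`, in shifted variables. -/
lemma aux_P4 (u s : ℝ) (hu : 0 ≤ u) (hs : 0 ≤ s) (h1 : s ≤ 1) :
    0 < (189 - 54*s - 567/2*s^2 + 1323/8*s^3)
      + u * (270 - 117*s - 1431/4*s^2 + 3591/16*s^3)
      + u^2 * (144 - 87*s - 297/2*s^2 + 405/4*s^3)
      + u^3 * (34 - 27*s - 81/4*s^2 + 243/16*s^3)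
      + u^4 * (3 - 3*s) := by
  have hss1 := mul_nonneg hs (sub_nonneg.2 h1)
  have hsss1 := mul_nonneg (mul_nonneg hs hs) (sub_nonneg.2 h1)
  have hss11 := mul_nonneg (mul_nonneg hs (sub_nonneg.2 h1)) (sub_nonneg.2 h1)
  have g0 : (0:ℝ) < 189 - 54*s - 567/2*s^2 + 1323/8*s^3 := by
    nlinarith [hss1, sq_nonneg (1-s), hsss1, hss11]
  have g1 : (0:ℝ) ≤ 270 - 117*s - 1431/4*s^2 + 3591/16*s^3 := by
    nlinarith [hss1, sq_nonneg (1-s), hsss1, hss11]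
  have g2 : (0:ℝ) ≤ 144 - 87*s - 297/2*s^2 + 405/4*s^3 := by
    nlinarith [hss1, sq_nonneg (1-s), hsss1, hss11]
  have g3 : (0:ℝ) ≤ 34 - 27*s - 81/4*s^2 + 243/16*s^3 := by
    nlinarith [hss1, sq_nonneg (1-s), hsss1, hss11]
  have g4 : (0:ℝ) ≤ 3 - 3*s := by linarith
  have h2 := mul_nonneg hu g1
  have h3 := mul_nonneg (pow_nonneg hu 2) g2
  have h4 := mul_nonneg (pow_nonneg hu 3) g3
  have h5 := mul_nonneg (pow_nonneg hu 4) g4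
  linarith

lemma aux_numer_pos (x p : ℝ) (hx : 2 ≤ x) (h1 : 3/4 ≤ p) (h2 : p ≤ 1) :
    0 < x*(3*x+1)^2*p^4 - 4*x*(x+1)*(3*x+1)*p^3 - 2*x*(x-1)*(x+1)^2*p^2
      + (x+1)^3*(3*x+1)*p - (x+1)^4 := by
  have h := aux_P3 (x-2) (4*p-3) (by linarith) (by linarith) (by linarith)
  nlinarith [h]

lemma aux_deriv_pos (x p : ℝ) (hx : 2 ≤ x) (h1 : 0 ≤ p) (h2 : p ≤ 3/4) :
    0 < 4*x*(3*x+1)^2*p^3 - 12*x*(x+1)*(3*x+1)*p^2 - 4*x*(x-1)*(x+1)^2*p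
      + (x+1)^3*(3*x+1) := by
  have h := aux_P4 (x-2) (4*p/3) (by linarith) (by linarith) (by linarith)
  nlinarith [h]

theorem stmt14 (d : ℕ) (hd : 2 ≤ d) :
    ∃! p : ℝ, p ∈ Set.Ioo (0 : ℝ) 1 ∧
      p ^ 4 - 4 * ((d : ℝ) + 1) / (3 * d + 1) * p ^ 3 -
        2 * ((d : ℝ) - 1) * (d + 1) ^ 2 / (3 * d + 1) ^ 2 * p ^ 2 +
        ((d : ℝ) + 1) ^ 3 / (d * (3 * d + 1)) * p -
        ((d : ℝ) + 1) ^ 4 / (d * (3 * d + 1) ^ 2) = 0 := by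
  have hx : (2:ℝ) ≤ (d:ℝ) := by exact_mod_cast hd
  set x : ℝ := (d:ℝ) with hxdef
  have hx0 : (0:ℝ) < x := by linarith
  have h31 : (0:ℝ) < 3*x+1 := by linarith
  have hD : (0:ℝ) < x*(3*x+1)^2 := by positivity
  have hxne : x ≠ 0 := ne_of_gt hx0
  have h31ne : (3*x+1) ≠ 0 := ne_of_gt h31
  set f : ℝ → ℝ := fun p => p ^ 4 - 4 * (x + 1) / (3 * x + 1) * p ^ 3 -
      2 * (x - 1) * (x + 1) ^ 2 / (3 * x + 1) ^ 2 * p ^ 2 +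
      (x + 1) ^ 3 / (x * (3 * x + 1)) * p -
      (x + 1) ^ 4 / (x * (3 * x + 1) ^ 2) with hfdef
  have hfeq : ∀ p : ℝ, f p = (x*(3*x+1)^2*p^4 - 4*x*(x+1)*(3*x+1)*p^3
      - 2*x*(x-1)*(x+1)^2*p^2 + (x+1)^3*(3*x+1)*p - (x+1)^4) / (x*(3*x+1)^2) := by
    intro p
    rw [hfdef]
    field_simp
  -- f is positive on [3/4, 1]
  have key3 : ∀ p : ℝ, 3/4 ≤ p → p ≤ 1 → 0 < f p := by
    intro p hp1 hp2
    rw [hfeq p]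
    exact div_pos (aux_numer_pos x p hx hp1 hp2) hD
  -- derivative of f
  have hderiv : ∀ p : ℝ, HasDerivAt f
      (4*p^3 - 4 * (x + 1) / (3 * x + 1) * (3*p^2)
        - 2 * (x - 1) * (x + 1) ^ 2 / (3 * x + 1) ^ 2 * (2*p)
        + (x + 1) ^ 3 / (x * (3 * x + 1))) p := by
    intro p
    have h := ((((hasDerivAt_pow 4 p).sub
        ((hasDerivAt_pow 3 p).const_mul (4 * (x + 1) / (3 * x + 1)))).sub
        ((hasDerivAt_pow 2 p).const_mul (2 * (x - 1) * (x + 1) ^ 2 / (3 * x + 1) ^ 2))).add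
        ((hasDerivAt_id p).const_mul ((x + 1) ^ 3 / (x * (3 * x + 1))))).sub_const
        ((x + 1) ^ 4 / (x * (3 * x + 1) ^ 2))
    have h2 : HasDerivAt f ((4:ℕ) * p ^ (4-1) - 4 * (x + 1) / (3 * x + 1) * ((3:ℕ) * p ^ (3-1))
        - 2 * (x - 1) * (x + 1) ^ 2 / (3 * x + 1) ^ 2 * ((2:ℕ) * p ^ (2-1))
        + (x + 1) ^ 3 / (x * (3 * x + 1)) * 1) p := h
    convert h2 using 1
    push_cast
    ring
  -- f is strictly monotone on [0, 3/4]
  have hcont : Continuous f := by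
    rw [hfdef]; fun_prop
  have key4 : StrictMonoOn f (Set.Icc (0:ℝ) (3/4)) := by
    apply strictMonoOn_of_deriv_pos (convex_Icc _ _) hcont.continuousOn
    intro p hp
    rw [interior_Icc] at hp
    rw [(hderiv p).deriv]
    have hN := aux_deriv_pos x p hx (le_of_lt hp.1) (le_of_lt hp.2)
    have heq : 4*p^3 - 4 * (x + 1) / (3 * x + 1) * (3*p^2)
        - 2 * (x - 1) * (x + 1) ^ 2 / (3 * x + 1) ^ 2 * (2*p)
        + (x + 1) ^ 3 / (x * (3 * x + 1))
        = (4*x*(3*x+1)^2*p^3 - 12*x*(x+1)*(3*x+1)*p^2 - 4*x*(x-1)*(x+1)^2*p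
          + (x+1)^3*(3*x+1)) / (x*(3*x+1)^2) := by
      field_simp
      ring
    rw [heq]
    exact div_pos hN hD
  -- endpoint values
  have hf0 : f 0 < 0 := by
    rw [hfeq 0]
    apply div_neg_of_neg_of_pos _ hD
    nlinarith
  have hf34 : 0 < f (3/4) := key3 (3/4) le_rfl (by norm_num)
  -- existence via IVT
  have hsub := intermediate_value_Ioo (by norm_num : (0:ℝ) ≤ 3/4) hcont.continuousOn
  have h0mem : (0:ℝ) ∈ Set.Ioo (f 0) (f (3/4)) := ⟨hf0, hf34⟩
  obtain ⟨p₀, hp₀mem, hp₀⟩ := hsub h0mem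
  -- roots in (0,1) are below 3/4
  have hroot_lt : ∀ q : ℝ, q ∈ Set.Ioo (0:ℝ) 1 → f q = 0 → q < 3/4 := by
    intro q hq hfq
    by_contra h
    push_neg at h
    have := key3 q h (le_of_lt hq.2)
    linarith [hfq ▸ this]
  refine ⟨p₀, ⟨⟨hp₀mem.1, lt_trans hp₀mem.2 (by norm_num)⟩, hp₀⟩, ?_⟩
  intro q ⟨hqmem, hfq0⟩
  have hfq : f q = 0 := hfq0
  have hq34 : q < 3/4 := hroot_lt q hqmem hfq
  have hp34 : p₀ < 3/4 := hp₀mem.2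
  have hqI : q ∈ Set.Icc (0:ℝ) (3/4) := ⟨le_of_lt hqmem.1, le_of_lt hq34⟩
  have hpI : p₀ ∈ Set.Icc (0:ℝ) (3/4) := ⟨le_of_lt hp₀mem.1, le_of_lt hp34⟩
  rcases lt_trichotomy q p₀ with h | h | h
  · have := key4 hqI hpI h
    rw [hfq, hp₀] at this
    exact absurd this (lt_irrefl 0)
  · exact h
  · have := key4 hpI hqI h
    rw [hfq, hp₀] at this
    exact absurd this (lt_irrefl 0)
end

section
/- For every integer d ≥ 2, the upper bound p̄ = (d+1)v̄/(1+dv̄²) — where v̄ is the unique root of d²v⁴ - d(d+1)v³ + 2dv - 1 in [0,1/d] — satisfies p̄ ≤ (d+1)/(2d). -/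
theorem stmt18 (d : ℕ) (hd : 2 ≤ d) (v : ℝ) (hv : v ∈ Set.Icc 0 (1 / (d : ℝ)))
    (hroot : (d : ℝ) ^ 2 * v ^ 4 - d * (d + 1) * v ^ 3 + 2 * d * v - 1 = 0) :
    ((d : ℝ) + 1) * v / (1 + d * v ^ 2) ≤ ((d : ℝ) + 1) / (2 * d) := by
  obtain ⟨hv0, hv1⟩ := hv
  have hd0 : (2:ℝ) ≤ d := by exact_mod_cast hd
  have hdpos : (0:ℝ) < d := by linarith
  have hdv : d * v ≤ 1 := by
    rw [le_div_iff₀ hdpos] at hv1; linarith [hv1]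
  have hv2 : v ≤ 1 := by nlinarith
  rw [div_le_div_iff₀ (by positivity) (by positivity)]
  nlinarith [mul_nonneg (mul_nonneg (mul_nonneg hdpos.le (mul_nonneg hv0 hv0)) (by linarith : (0:ℝ) ≤ 1 - v)) (by linarith : (0:ℝ) ≤ 1 - d * v), sq_nonneg v]
end
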